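/- arXiv:1902.09570 — 3 statements merged into one kernel-verified Lean document; each statement's English description precedes it below -/
import Mathlib

section
/- (Finitely supported Cantor theorem) Let X be a finitely supported subset of an invariant set under finitary permutations of A. Then the map x ↦ {x} is a finitely supported injection from X into ℘_fs(X), but there is no finitely supported surjection from X onto ℘_fs(X); hence |X| is strictly smaller than |℘_fs(X)| both with respect to finitely supported injections and with respect to finitely supported surjections. -/
open Pointwise

/-- The group of finitary permutations of the set `A` of atoms: bijections of `A`
whose set of non-fixed points is finite. -/
def FinPerm (A : Type*) : Subgroup (Equiv.Perm A) where
  carrier := {π : Equiv.Perm A | {a : A | π a ≠ a}.Finite}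
  one_mem' := by simp
  mul_mem' := by
    intro π σ hπ hσ
    refine Set.Finite.subset (Set.Finite.union hπ hσ) ?_
    intro a ha
    simp only [Set.mem_setOf_eq, Set.mem_union] at *
    by_contra h
    push_neg at h
    obtain ⟨h1, h2⟩ := h
    exact ha (by rw [Equiv.Perm.mul_apply, h2, h1])
  inv_mem' := by
    intro π hπ
    refine Set.Finite.subset hπ ?_
    intro a ha
    simp only [Set.mem_setOf_eq] at *
    intro h
    exact ha (π.injective (by simp [h]))

/-- An element `x` is finitely supported if some finite set of atoms supports it. -/
def FinSupp (A : Type*) {X : Type*} [SMul (FinPerm A) X] (x : X) : Prop :=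
  ∃ S : Finset A, MulAction.Supports (FinPerm A) (S : Set A) x

/-- The least support of an element: the intersection of all finite sets of atoms
supporting it. -/
def supp (A : Type*) {X : Type*} [SMul (FinPerm A) X] (x : X) : Set A :=
  ⋂₀ {S : Set A | S.Finite ∧ MulAction.Supports (FinPerm A) S x}

/-- A set `S` of atoms supports a function `f` if `f (π • x) = π • f x` for every
finitary permutation `π` fixing `S` pointwise. -/
def SuppFun (A : Type*) {X Y : Type*} [SMul (FinPerm A) X] [SMul (FinPerm A) Y]
    (S : Set A) (f : X → Y) : Prop :=
  ∀ π : FinPerm A, (∀ a ∈ S, π • a = a) → ∀ x, f (π • x) = π • f x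

/-- A set `S` of atoms supports a function `f` between the subsets `X` and `Y` if, for
every finitary permutation `π` fixing `S` pointwise and every `x ∈ X`, we have
`π • x ∈ X`, `π • f x ∈ Y` and `f (π • x) = π • f x`. -/
def SuppFunOn (A : Type*) {U V : Type*} [SMul (FinPerm A) U] [SMul (FinPerm A) V]
    (S : Set A) (X : Set U) (Y : Set V) (f : U → V) : Prop :=
  ∀ π : FinPerm A, (∀ a ∈ S, π • a = a) →
    ∀ x ∈ X, π • x ∈ X ∧ π • f x ∈ Y ∧ f (π • x) = π • f x

/-- `℘_fs(X)`: the finitely supported subsets of the set `X`. -/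
def Pfs (A : Type*) {U : Type*} [SMul (FinPerm A) U] (X : Set U) : Set (Set U) :=
  {Z : Set U | Z ⊆ X ∧ FinSupp A Z}

/-!
Cantor's diagonal argument goes through because the diagonal set `{x ∈ X | x ∉ F x}` is
supported by any support of `F`: a permutation fixing that support maps the diagonal into
itself, and so does its inverse.
-/

section

variable {A U : Type*} [SMul (FinPerm A) U]

lemma finSupp_singleton {x : U} (hx : FinSupp A x) : FinSupp A ({x} : Set U) := by
  obtain ⟨S, hS⟩ := hx
  exact ⟨S, fun π hπ => by rw [Set.smul_set_singleton, hS π hπ]⟩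

lemma singleton_mem_pfs {X : Set U} {x : U} (hxX : x ∈ X) (hx : FinSupp A x) :
    ({x} : Set U) ∈ Pfs A X :=
  ⟨Set.singleton_subset_iff.mpr hxX, finSupp_singleton hx⟩

lemma suppFunOn_singleton {S : Set A} {X : Set U} (hS : MulAction.Supports (FinPerm A) S X)
    (hX : ∀ x ∈ X, FinSupp A x) : SuppFunOn A S X (Pfs A X) (fun x : U => ({x} : Set U)) := by
  intro π hπ x hx
  have hπx : π • x ∈ X := hS π hπ ▸ Set.smul_mem_smul_set hx
  exact ⟨hπx, by simpa only [Set.smul_set_singleton] using singleton_mem_pfs hπx (hX _ hπx),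
    Set.smul_set_singleton.symm⟩

end

section

variable {A U : Type*} [MulAction (FinPerm A) U]

lemma inv_smul_atom_eq {S : Set A} {π : FinPerm A} (hπ : ∀ a ∈ S, π • a = a) :
    ∀ a ∈ S, π⁻¹ • a = a :=
  fun a ha => inv_smul_eq_iff.mpr (hπ a ha).symm

lemma supports_of_smul_subset {S : Set A} {D : Set U}
    (h : ∀ π : FinPerm A, (∀ a ∈ S, π • a = a) → π • D ⊆ D) :
    MulAction.Supports (FinPerm A) S D := by
  intro π hπ
  refine (h π hπ).antisymm fun x hx => ?_
  exact Set.mem_smul_set.mpr ⟨π⁻¹ • x, h π⁻¹ (inv_smul_atom_eq hπ) (Set.smul_mem_smul_set hx),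
    smul_inv_smul π x⟩

lemma diagonal_mem_pfs {S : Finset A} {X : Set U} {Y : Set (Set U)}
    {F : U → Set U} (hF : SuppFunOn A (S : Set A) X Y F) : {x | x ∈ X ∧ x ∉ F x} ∈ Pfs A X := by
  refine ⟨fun x hx => hx.1, S, supports_of_smul_subset fun π hπ => ?_⟩
  rintro _ ⟨x, ⟨hxX, hxF⟩, rfl⟩
  obtain ⟨hπx, -, hFπx⟩ := hF π hπ x hxX
  exact ⟨hπx, by rwa [hFπx, Set.smul_mem_smul_set_iff]⟩

end

lemma Set.apply_ne_diagonal {U : Type*} {X : Set U} (F : U → Set U) {x : U} (hx : x ∈ X) :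
    F x ≠ {x | x ∈ X ∧ x ∉ F x} := by
  intro hFx
  by_cases h : x ∈ F x
  · exact (hFx ▸ h).2 h
  · exact h (hFx ▸ ⟨hx, h⟩)

theorem fsm_cantor_general {A U : Type*} [MulAction (FinPerm A) U]
    (hU : ∀ u : U, FinSupp A u) (X : Set U) (hX : FinSupp A X) :
    ((∀ x ∈ X, ({x} : Set U) ∈ Pfs A X) ∧
      Set.InjOn (fun x : U => ({x} : Set U)) X ∧
      (∃ S : Finset A, SuppFunOn A (S : Set A) X (Pfs A X) (fun x : U => ({x} : Set U)))) ∧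
    (¬ ∃ (F : U → Set U) (S : Finset A),
      (∀ x ∈ X, F x ∈ Pfs A X) ∧ (∀ Z ∈ Pfs A X, ∃ x ∈ X, F x = Z) ∧
      SuppFunOn A (S : Set A) X (Pfs A X) F) ∧
    (¬ ∃ (F : U → Set U) (S : Finset A),
      (∀ x ∈ X, F x ∈ Pfs A X) ∧ Set.InjOn F X ∧ (∀ Z ∈ Pfs A X, ∃ x ∈ X, F x = Z) ∧
      SuppFunOn A (S : Set A) X (Pfs A X) F) := by
  obtain ⟨SX, hSX⟩ := hX
  have no_surj : ¬ ∃ (F : U → Set U) (S : Finset A),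
      (∀ x ∈ X, F x ∈ Pfs A X) ∧ (∀ Z ∈ Pfs A X, ∃ x ∈ X, F x = Z) ∧
      SuppFunOn A (S : Set A) X (Pfs A X) F := by
    rintro ⟨F, S, -, hsurj, hF⟩
    obtain ⟨x, hx, hFx⟩ := hsurj _ (diagonal_mem_pfs hF)
    exact Set.apply_ne_diagonal F hx hFx
  exact ⟨⟨fun x hx => singleton_mem_pfs hx (hU x), Set.singleton_injective.injOn,
      ⟨SX, suppFunOn_singleton hSX fun x _ => hU x⟩⟩,
    no_surj, fun ⟨F, S, hmem, _, hsurj, hF⟩ => no_surj ⟨F, S, hmem, hsurj, hF⟩⟩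

/-- finitely supported Cantor theorem: for a finitely supported subset `X`
of an invariant set, the map `x ↦ {x}` is a finitely supported injection from `X` into
`℘_fs(X)`, but there is no finitely supported surjection from `X` onto `℘_fs(X)`; hence
`|X|` is strictly smaller than `|℘_fs(X)|` both with respect to finitely supported
injections and with respect to finitely supported surjections (in particular there is no
finitely supported bijection between `X` and `℘_fs(X)`). -/
theorem fsm_cantor {A U : Type*} [Infinite A] [MulAction (FinPerm A) U]
    (hU : ∀ u : U, FinSupp A u) (X : Set U) (hX : FinSupp A X) :
    ((∀ x ∈ X, ({x} : Set U) ∈ Pfs A X) ∧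
      Set.InjOn (fun x : U => ({x} : Set U)) X ∧
      (∃ S : Finset A, SuppFunOn A (S : Set A) X (Pfs A X) (fun x : U => ({x} : Set U)))) ∧
    (¬ ∃ (F : U → Set U) (S : Finset A),
      (∀ x ∈ X, F x ∈ Pfs A X) ∧ (∀ Z ∈ Pfs A X, ∃ x ∈ X, F x = Z) ∧
      SuppFunOn A (S : Set A) X (Pfs A X) F) ∧
    (¬ ∃ (F : U → Set U) (S : Finset A),
      (∀ x ∈ X, F x ∈ Pfs A X) ∧ Set.InjOn F X ∧ (∀ Z ∈ Pfs A X, ∃ x ∈ X, F x = Z) ∧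
      SuppFunOn A (S : Set A) X (Pfs A X) F) :=
  fsm_cantor_general hU X hX
end

section
/- There is no finitely supported surjection from ℘_fs(A) (the finitely supported, i.e. finite or cofinite, subsets of the set A of atoms, with the elementwise action) onto A × A (with the componentwise action of finitary permutations). -/
open Pointwise

/-
Let `F` be supported by the finite set `S`, and take distinct atoms `a, b, c` outside `S`
with `F X = (a, b)`. Two of `a, b, c` lie on the same side of `X`, so the transposition
`σ` exchanging them fixes `S` pointwise and fixes `X`; by equivariance it fixes `F X = (a, b)`.
But one of the two exchanged atoms is `a` or `b`, which `σ` moves.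
-/

namespace FinPerm

variable {A : Type*} [DecidableEq A]

def swap (u v : A) : FinPerm A :=
  ⟨Equiv.swap u v, (Set.toFinite {u, v}).subset fun _ ha => by
    simpa using (Equiv.swap_apply_ne_self_iff.1 ha).2⟩

@[simp]
lemma swap_smul (u v a : A) : swap u v • a = Equiv.swap u v a := rfl

@[simp]
lemma swap_inv (u v : A) : (swap u v)⁻¹ = swap u v :=
  Subtype.ext (Equiv.swap_inv u v)

lemma swap_smul_set_of_mem_iff {u v : A} {X : Set A} (h : u ∈ X ↔ v ∈ X) :
    swap u v • X = X := by
  ext x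
  rw [Set.mem_smul_set_iff_inv_smul_mem, swap_inv, swap_smul, Equiv.swap_apply_def]
  split_ifs with hxu hxv
  · rw [hxu, h]
  · rw [hxv, h]
  · rfl

lemma swap_smul_of_notMem {S : Set A} {u v : A} (hu : u ∉ S) (hv : v ∉ S) :
    ∀ a ∈ S, swap u v • a = a := fun a ha =>
  Equiv.swap_apply_of_ne_of_ne (by rintro rfl; exact hu ha) (by rintro rfl; exact hv ha)

end FinPerm

lemma fst_ne_and_snd_ne_of_mem_iff {A : Type*} [DecidableEq A] {F : Set A → A × A}
    {S : Set A}
    (hF : ∀ π : FinPerm A, (∀ a ∈ S, π • a = a) → ∀ X : Set A, FinSupp A X → F (π • X) = π • F X)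
    {X : Set A} (hX : FinSupp A X) {u v : A} (hu : u ∉ S) (hv : v ∉ S) (huv : u ≠ v)
    (hmem : u ∈ X ↔ v ∈ X) : (F X).1 ≠ u ∧ (F X).2 ≠ u := by
  have hfix : FinPerm.swap u v • F X = F X := by
    rw [← hF _ (FinPerm.swap_smul_of_notMem hu hv) X hX, FinPerm.swap_smul_set_of_mem_iff hmem]
  have hmoved : ∀ z, Equiv.swap u v z = z → z ≠ u := fun z hz hzu =>
    Equiv.swap_apply_ne_self_iff.2 ⟨huv, .inl hzu⟩ hz
  exact ⟨hmoved _ (congrArg Prod.fst hfix), hmoved _ (congrArg Prod.snd hfix)⟩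

/-- there is no finitely supported surjection from `℘_fs(A)` (the finitely
supported subsets of the set of atoms, with the elementwise action) onto `A × A` (with
the componentwise action). -/
theorem no_finSupp_surjection_pfsAtoms_to_atomPairs {A : Type*} [Infinite A] :
    ¬ ∃ (F : Set A → A × A) (S : Finset A),
      (∀ π : FinPerm A, (∀ a ∈ (S : Set A), π • a = a) →
        ∀ X : Set A, FinSupp A X → F (π • X) = π • F X) ∧
      (∀ p : A × A, ∃ X : Set A, FinSupp A X ∧ F X = p) := by
  classical
  rintro ⟨F, S, hF, hsurj⟩
  obtain ⟨a, ha⟩ := Infinite.exists_notMem_finset S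
  obtain ⟨b, hb⟩ := Infinite.exists_notMem_finset (insert a S)
  obtain ⟨c, hc⟩ := Infinite.exists_notMem_finset (insert b (insert a S))
  simp only [Finset.mem_insert, not_or] at hb hc
  obtain ⟨X, hX, hFX⟩ := hsurj (a, b)
  have hsep := @fst_ne_and_snd_ne_of_mem_iff A _ F S hF X hX
  rw [hFX] at hsep
  rcases (by tauto : (a ∈ X ↔ c ∈ X) ∨ (b ∈ X ↔ c ∈ X) ∨ (a ∈ X ↔ b ∈ X)) with h | h | h
  · exact (hsep ha hc.2.2 (Ne.symm hc.2.1) h).1 rfl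
  · exact (hsep hb.2 hc.2.2 (Ne.symm hc.1) h).2 rfl
  · exact (hsep ha hb.2 (Ne.symm hb.1) h).1 rfl
end

section
/- Let X be a finitely supported subset of an invariant set under finitary permutations of A. The following are equivalent: (i) X is FSM Dedekind infinite, i.e., there exists a finitely supported injection from X onto a finitely supported proper subset of X; (ii) there exists a finitely supported injection f : ℕ → X, where ℕ carries the trivial action; equivalently, there exists an injective sequence (x_n)_{n ∈ ℕ} of elements of X all of whose terms are supported by one common finite set of atoms. -/
open Pointwise

/-!
If `g` maps `X` injectively onto a proper subset, the orbit `gⁿ x₀` of a point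
`x₀ ∈ X \ g '' X` is injective, and every term is supported by the union of supports of
`g` and `x₀`. Conversely, along an injective sequence `(xₙ)` in `X` the shift
`xₙ ↦ xₙ₊₁`, extended by the identity, maps `X` injectively onto `X \ {x₀}`; any
permutation fixing every `xₙ` commutes with it, so it is supported by the union of
supports of `X` and of the sequence.
-/

open Function Set MulAction

theorem Set.InjOn.iterate_injective_of_notMem_image {U : Type*} {f : U → U} {X : Set U}
    (hf : InjOn f X) (hmaps : MapsTo f X X) {x : U} (hx : x ∈ X) (hx' : x ∉ f '' X) :
    Injective fun n => f^[n] x := by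
  have hne : ∀ k, x ≠ f^[k + 1] x := fun k h =>
    hx' ⟨f^[k] x, hmaps.iterate k hx, (iterate_succ_apply' f k x).symm.trans h.symm⟩
  intro m n h
  induction m generalizing n with
  | zero => cases n with
    | zero => rfl
    | succ l => exact absurd h (hne l)
  | succ k ih => cases n with
    | zero => exact absurd h.symm (hne k)
    | succ l =>
      simp only [iterate_succ_apply'] at h
      rw [ih (hf (hmaps.iterate k hx) (hmaps.iterate l hx) h)]

section NatShift

variable {U : Type*} {f : ℕ → U}

noncomputable def natShift (f : ℕ → U) : U → U :=
  extend f (f ∘ Nat.succ) id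

theorem natShift_apply_self (hf : Injective f) (n : ℕ) : natShift f (f n) = f (n + 1) :=
  hf.extend_apply _ _ n

theorem natShift_apply_of_notMem_range {u : U} (hu : u ∉ range f) : natShift f u = u :=
  extend_apply' _ _ _ hu

theorem natShift_injective (hf : Injective f) : Injective (natShift f) := by
  intro u v huv
  rcases em (u ∈ range f) with ⟨m, rfl⟩ | hu <;> rcases em (v ∈ range f) with ⟨n, rfl⟩ | hv
  · rw [natShift_apply_self hf, natShift_apply_self hf] at huv
    rw [Nat.succ_injective (hf huv)]
  · rw [natShift_apply_self hf, natShift_apply_of_notMem_range hv] at huv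
    exact absurd ⟨_, huv⟩ hv
  · rw [natShift_apply_of_notMem_range hu, natShift_apply_self hf] at huv
    exact absurd ⟨_, huv.symm⟩ hu
  · rwa [natShift_apply_of_notMem_range hu, natShift_apply_of_notMem_range hv] at huv

theorem image_natShift (hf : Injective f) {X : Set U} (hfX : range f ⊆ X) :
    natShift f '' X = X \ {f 0} := by
  ext v
  constructor
  · rintro ⟨u, huX, rfl⟩
    rcases em (u ∈ range f) with ⟨n, rfl⟩ | hu
    · rw [natShift_apply_self hf]
      exact ⟨hfX (mem_range_self _), fun h => n.succ_ne_zero (hf h)⟩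
    · rw [natShift_apply_of_notMem_range hu]
      exact ⟨huX, fun h => hu ⟨0, h.symm⟩⟩
  · rintro ⟨hvX, hv0⟩
    rcases em (v ∈ range f) with ⟨_ | n, rfl⟩ | hv
    · exact absurd rfl hv0
    · exact ⟨f n, hfX (mem_range_self n), natShift_apply_self hf n⟩
    · exact ⟨v, hvX, natShift_apply_of_notMem_range hv⟩

theorem natShift_smul {G : Type*} [Group G] [MulAction G U] (hf : Injective f) {g : G}
    (hg : ∀ n, g • f n = f n) (u : U) : natShift f (g • u) = g • natShift f u := by
  rcases em (u ∈ range f) with ⟨n, rfl⟩ | hu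
  · rw [hg, natShift_apply_self hf, hg]
  · have hgu : g • u ∉ range f := fun ⟨n, hn⟩ => hu ⟨n, smul_left_cancel g (by rw [hg, hn])⟩
    rw [natShift_apply_of_notMem_range hu, natShift_apply_of_notMem_range hgu]

end NatShift

namespace MulAction.Supports

variable {G α U : Type*} [Group G] [SMul G α] [MulAction G U] {S T : Set α} {X : Set U}

theorem smul_mem (hX : Supports G S X) {g : G} (hg : ∀ ⦃a⦄, a ∈ S → g • a = a) {x : U}
    (hx : x ∈ X) : g • x ∈ X :=
  hX g hg ▸ smul_mem_smul_set hx

theorem diff_singleton (hX : Supports G S X) {u : U} (hu : Supports G T u) :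
    Supports G (S ∪ T) (X \ {u}) := fun g hg => by
  rw [smul_set_sdiff, smul_set_singleton, hX.mono subset_union_left g hg,
    hu.mono subset_union_right g hg]

end MulAction.Supports

section Finitary

variable {A U V : Type*} [MulAction (FinPerm A) U] [MulAction (FinPerm A) V]
  {S T : Set A} {X : Set U}

theorem SuppFunOn.mono {Y : Set V} {f : U → V} (hST : S ⊆ T) (hf : SuppFunOn A S X Y f) :
    SuppFunOn A T X Y f :=
  fun π hπ => hf π fun a ha => hπ a (hST ha)

theorem SuppFunOn.supports_apply {Y : Set V} {f : U → V} (hf : SuppFunOn A S X Y f) {x : U}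
    (hx : x ∈ X) (hS : Supports (FinPerm A) S x) : Supports (FinPerm A) S (f x) :=
  fun π hπ => by rw [← (hf π (fun _ ha => hπ ha) x hx).2.2, hS π hπ]

theorem SuppFunOn.supports_iterate {Y : Set U} {f : U → U} (hf : SuppFunOn A S X Y f)
    (hmaps : MapsTo f X X) {x : U} (hx : x ∈ X) (hS : Supports (FinPerm A) S x) (n : ℕ) :
    Supports (FinPerm A) S (f^[n] x) := by
  induction n with
  | zero => exact hS
  | succ n ih =>
    rw [iterate_succ_apply']
    exact hf.supports_apply (hmaps.iterate n hx) ih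

theorem suppFunOn_natShift {f : ℕ → U} (hf : Injective f) (hfX : range f ⊆ X)
    (hX : Supports (FinPerm A) T X) (hS : ∀ n, Supports (FinPerm A) S (f n)) :
    SuppFunOn A (T ∪ S) X (X \ {f 0}) (natShift f) := by
  intro π hπ x hx
  have hπT : ∀ ⦃a⦄, a ∈ T → π • a = a := fun a ha => hπ a (Or.inl ha)
  have hπS : ∀ ⦃a⦄, a ∈ S → π • a = a := fun a ha => hπ a (Or.inr ha)
  have hshift : natShift f x ∈ X \ {f 0} := image_natShift hf hfX ▸ mem_image_of_mem _ hx
  exact ⟨hX.smul_mem hπT hx, (hX.diff_singleton (hS 0)).smul_mem hπ hshift,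
    natShift_smul hf (fun n => hS n π hπS) x⟩

end Finitary

theorem fsm_dedekind_infinite_iff_nat_injection_general {A U : Type*}
    [MulAction (FinPerm A) U] (hU : ∀ u : U, FinSupp A u)
    (X : Set U) (hX : FinSupp A X) :
    ((∃ (f : U → U) (Z : Set U) (S : Finset A),
        Z ⊆ X ∧ Z ≠ X ∧ FinSupp A Z ∧ Set.InjOn f X ∧ f '' X = Z ∧
        SuppFunOn A (S : Set A) X Z f) ↔
      (∃ f : ℕ → U, Function.Injective f ∧ (∀ n, f n ∈ X) ∧
        ∃ S : Finset A, ∀ π : FinPerm A, (∀ a ∈ (S : Set A), π • a = a) →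
          ∀ n : ℕ, π • f n = f n)) ∧
    ((∃ f : ℕ → U, Function.Injective f ∧ (∀ n, f n ∈ X) ∧
        ∃ S : Finset A, ∀ π : FinPerm A, (∀ a ∈ (S : Set A), π • a = a) →
          ∀ n : ℕ, π • f n = f n) ↔
      (∃ x : ℕ → U, Function.Injective x ∧ (∀ n, x n ∈ X) ∧
        ∃ S : Finset A, ∀ n : ℕ, MulAction.Supports (FinPerm A) (S : Set A) (x n))) := by
  classical
  refine ⟨⟨?_, ?_⟩, ?_⟩
  · rintro ⟨g, _, S, hgX, hgX', -, hinj, rfl, hg⟩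
    obtain ⟨x₀, hx₀X, hx₀⟩ := exists_of_ssubset (hgX.ssubset_of_ne hgX')
    obtain ⟨S₀, hS₀⟩ := hU x₀
    have hmaps : MapsTo g X X := fun x hx => hgX (mem_image_of_mem g hx)
    refine ⟨fun n => g^[n] x₀, hinj.iterate_injective_of_notMem_image hmaps hx₀X hx₀,
      fun n => hmaps.iterate n hx₀X, S ∪ S₀, fun π hπ n => ?_⟩
    rw [Finset.coe_union] at hπ
    exact (hg.mono subset_union_left).supports_iterate hmaps hx₀X
      (hS₀.mono subset_union_right) n π hπ
  · rintro ⟨f, hf, hfX, S, hS⟩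
    obtain ⟨T, hT⟩ := hX
    have hSn : ∀ n, Supports (FinPerm A) (S : Set A) (f n) := fun n π hπ => hS π hπ n
    have hrange : range f ⊆ X := range_subset_iff.2 hfX
    have hssubset : X \ {f 0} ⊂ X := sdiff_singleton_ssubset.2 (hfX 0)
    refine ⟨natShift f, X \ {f 0}, T ∪ S, hssubset.subset, hssubset.ne,
      ⟨T ∪ S, ?_⟩, (natShift_injective hf).injOn, image_natShift hf hrange, ?_⟩ <;>
      rw [Finset.coe_union]
    · exact hT.diff_singleton (hSn 0)
    · exact suppFunOn_natShift hf hrange hT hSn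
  · exact ⟨fun ⟨f, hf, hfX, S, hS⟩ => ⟨f, hf, hfX, S, fun n π hπ => hS π hπ n⟩,
      fun ⟨f, hf, hfX, S, hS⟩ => ⟨f, hf, hfX, S, fun π hπ n => hS n π hπ⟩⟩

/-- for a finitely supported subset `X` of an invariant set the following
are equivalent:
(i) `X` is FSM Dedekind infinite, i.e. there is a finitely supported injection from `X`
    onto a finitely supported proper subset of `X`;
(ii) there is a finitely supported injection `f : ℕ → X` (ℕ carrying the trivial
     action); equivalently,
(iii) there is an injective sequence of elements of `X` all of whose terms are supported
      by one common finite set of atoms. -/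
theorem fsm_dedekind_infinite_iff_nat_injection {A U : Type*} [Infinite A]
    [MulAction (FinPerm A) U] (hU : ∀ u : U, FinSupp A u)
    (X : Set U) (hX : FinSupp A X) :
    ((∃ (f : U → U) (Z : Set U) (S : Finset A),
        Z ⊆ X ∧ Z ≠ X ∧ FinSupp A Z ∧ Set.InjOn f X ∧ f '' X = Z ∧
        SuppFunOn A (S : Set A) X Z f) ↔
      (∃ f : ℕ → U, Function.Injective f ∧ (∀ n, f n ∈ X) ∧
        ∃ S : Finset A, ∀ π : FinPerm A, (∀ a ∈ (S : Set A), π • a = a) →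
          ∀ n : ℕ, π • f n = f n)) ∧
    ((∃ f : ℕ → U, Function.Injective f ∧ (∀ n, f n ∈ X) ∧
        ∃ S : Finset A, ∀ π : FinPerm A, (∀ a ∈ (S : Set A), π • a = a) →
          ∀ n : ℕ, π • f n = f n) ↔
      (∃ x : ℕ → U, Function.Injective x ∧ (∀ n, x n ∈ X) ∧
        ∃ S : Finset A, ∀ n : ℕ, MulAction.Supports (FinPerm A) (S : Set A) (x n))) :=
  fsm_dedekind_infinite_iff_nat_injection_general hU X hX
end
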